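/- arXiv:physics/0605007 — 2 statements merged into one kernel-verified Lean document; each statement's English description precedes it below -/
import Mathlib

section
/- Let θ : [0, b) → ℝ be differentiable and satisfy the Riccati-type inequality θ'(t) ≤ -θ(t)²/n for some n > 0 on its domain of definition, with θ(0) = θ₀ < 0. Then θ cannot be extended as a solution beyond time t = n/|θ₀|; more precisely, if θ is defined on [0, b) then b ≤ n/|θ₀|. (This is the focusing effect: a negative initial divergence forces blow-up to -∞ in finite affine parameter.) -/
/-- Focusing effect: a Riccati-type inequality θ' ≤ -θ²/n with negative initial
value θ₀ forces blow-up, so a solution on [0, b) requires b ≤ n/|θ₀|. -/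
theorem riccati_blowup (n b θ₀ : ℝ) (hn : 0 < n) (hb : 0 < b)
    (θ θ' : ℝ → ℝ)
    (hderiv : ∀ t ∈ Set.Ico (0 : ℝ) b, HasDerivAt θ (θ' t) t)
    (hineq : ∀ t ∈ Set.Ico (0 : ℝ) b, θ' t ≤ -(θ t) ^ 2 / n)
    (h0 : θ 0 = θ₀) (hneg : θ₀ < 0) :
    b ≤ n / |θ₀| := by
  have hconv : Convex ℝ (Set.Ico (0:ℝ) b) := convex_Ico 0 b
  have hcont : ContinuousOn θ (Set.Ico 0 b) := fun t ht =>
    (hderiv t ht).continuousAt.continuousWithinAt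
  have hint : interior (Set.Ico (0:ℝ) b) = Set.Ioo 0 b := interior_Ico
  -- θ is antitone on [0,b)
  have hanti : AntitoneOn θ (Set.Ico 0 b) := by
    apply antitoneOn_of_deriv_nonpos hconv hcont
    · intro x hx
      rw [hint] at hx
      exact (hderiv x ⟨le_of_lt hx.1, hx.2⟩).differentiableAt.differentiableWithinAt
    intro x hx
    rw [hint] at hx
    have hx' : x ∈ Set.Ico (0:ℝ) b := ⟨le_of_lt hx.1, hx.2⟩
    rw [(hderiv x hx').deriv]
    have := hineq x hx'
    have h2 : -(θ x) ^ 2 / n ≤ 0 :=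
      div_nonpos_of_nonpos_of_nonneg (neg_nonpos.2 (sq_nonneg _)) hn.le
    linarith
  -- θ stays negative
  have hθneg : ∀ t ∈ Set.Ico (0:ℝ) b, θ t < 0 := by
    intro t ht
    have h0mem : (0:ℝ) ∈ Set.Ico (0:ℝ) b := ⟨le_refl 0, hb⟩
    have := hanti h0mem ht ht.1
    rw [h0] at this
    linarith
  -- g t = 1/θ t - t/n is monotone
  set g : ℝ → ℝ := fun t => (θ t)⁻¹ - t / n with hg
  have hgderiv : ∀ t ∈ Set.Ico (0:ℝ) b, HasDerivAt g (-θ' t / (θ t) ^ 2 - 1 / n) t := by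
    intro t ht
    exact ((hderiv t ht).inv (hθneg t ht).ne).sub
      ((hasDerivAt_id t).div_const n)
  have hgcont : ContinuousOn g (Set.Ico 0 b) := fun t ht =>
    (hgderiv t ht).continuousAt.continuousWithinAt
  have hmono : MonotoneOn g (Set.Ico 0 b) := by
    apply monotoneOn_of_deriv_nonneg hconv hgcont
    · intro x hx
      rw [hint] at hx
      exact (hgderiv x ⟨le_of_lt hx.1, hx.2⟩).differentiableAt.differentiableWithinAt
    intro x hx
    rw [hint] at hx
    have hx' : x ∈ Set.Ico (0:ℝ) b := ⟨le_of_lt hx.1, hx.2⟩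
    rw [(hgderiv x hx').deriv]
    have hθx := hθneg x hx'
    have hsq : 0 < (θ x) ^ 2 := by
      have := hθx.ne
      positivity
    have hnd : -(θ x) ^ 2 / n = -((θ x) ^ 2 / n) := neg_div _ _
    have h2 : (θ x) ^ 2 / n ≤ -θ' x := by
      have h1 := hineq x hx'
      rw [hnd] at h1
      linarith
    have key : 1 / n ≤ -θ' x / (θ x) ^ 2 := by
      rw [le_div_iff₀ hsq, one_div, ← div_eq_inv_mul]
      exact h2
    linarith
  -- conclusion
  by_contra hcon
  push_neg at hcon
  set T := n / |θ₀| with hT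
  have habs : |θ₀| = -θ₀ := abs_of_neg hneg
  have hTpos : 0 < T := div_pos hn (by rw [habs]; linarith)
  have hTmem : T ∈ Set.Ico (0:ℝ) b := ⟨hTpos.le, hcon⟩
  have h0mem : (0:ℝ) ∈ Set.Ico (0:ℝ) b := ⟨le_refl 0, hb⟩
  have hg0 : g 0 ≤ g T := hmono h0mem hTmem hTpos.le
  have hgT : g T = (θ T)⁻¹ - T / n := rfl
  have hg00 : g 0 = θ₀⁻¹ := by simp [hg, h0]
  have hTn : T / n = 1 / (-θ₀) := by
    rw [hT, habs]
    rw [div_div]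
    rw [mul_comm]
    rw [← div_div]
    rw [div_self hn.ne']
  have hθT := hθneg T hTmem
  have hinv : (θ T)⁻¹ < 0 := inv_neg''.2 hθT
  have hinv0 : θ₀⁻¹ = -(1 / (-θ₀)) := by field_simp
  rw [hgT, hg00, hTn, hinv0] at hg0
  linarith
end

section
/- Suppose θ : ℝ → ℝ is C¹ and satisfies θ' + θ²/n ≤ 0 everywhere (n > 0). If θ(t₁) ≠ 0 for some t₁, then θ cannot be defined on all of ℝ; hence θ is defined on all of ℝ only if θ ≡ 0. Consequently, on a complete geodesic of a spacetime satisfying R_{μν}u^μu^ν ≥ 0, a vorticity-free expansion must vanish identically or blow up. -/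
/-- The key case: if θ is C¹, satisfies θ' + θ²/n ≤ 0 and θ(t₁) < 0, contradiction. -/
lemma complete_expansion_vanishes_neg (n : ℝ) (hn : 0 < n) (θ : ℝ → ℝ)
    (hC : ContDiff ℝ 1 θ)
    (hineq : ∀ t : ℝ, deriv θ t + (θ t) ^ 2 / n ≤ 0)
    (t₁ : ℝ) (h1 : θ t₁ < 0) : False := by
  have hdiff : Differentiable ℝ θ := hC.differentiable one_ne_zero
  -- θ is antitone
  have hanti : Antitone θ := by
    apply antitone_of_deriv_nonpos hdiff
    intro x
    have := hineq x
    have hsq : 0 ≤ (θ x) ^ 2 / n := div_nonneg (sq_nonneg _) hn.le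
    linarith
  have hneg : ∀ t ∈ Set.Ici t₁, θ t < 0 := fun t ht => lt_of_le_of_lt (hanti ht) h1
  -- derivative of inverse
  have hderivinv : ∀ t, θ t ≠ 0 →
      HasDerivAt (fun s => (θ s)⁻¹) (-(deriv θ t) / (θ t) ^ 2) t := by
    intro t ht
    exact ((hdiff t).hasDerivAt).inv ht
  -- lower bound on growth of inverse on Ici t₁
  have key : ∀ x ∈ Set.Ici t₁, ∀ y ∈ Set.Ici t₁, x ≤ y →
      (1 / n) * (y - x) ≤ (θ y)⁻¹ - (θ x)⁻¹ := by
    have hcont : ContinuousOn (fun s => (θ s)⁻¹) (Set.Ici t₁) :=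
      ContinuousOn.inv₀ hdiff.continuous.continuousOn (fun t ht => (hneg t ht).ne)
    have hd : ∀ x ∈ interior (Set.Ici t₁), 1 / n ≤ deriv (fun s => (θ s)⁻¹) x := by
      intro x hx
      rw [interior_Ici] at hx
      have hxI : x ∈ Set.Ici t₁ := Set.mem_Ici.mpr (le_of_lt (Set.mem_Ioi.mp hx))
      have hne : θ x ≠ 0 := (hneg x hxI).ne
      rw [(hderivinv x hne).deriv]
      have hsq' : 0 < (θ x) ^ 2 := by positivity
      have h2 : (θ x) ^ 2 / n ≤ -(deriv θ x) := by linarith [hineq x]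
      rw [le_div_iff₀ hsq']
      calc 1 / n * θ x ^ 2 = (θ x) ^ 2 / n := by ring
        _ ≤ -(deriv θ x) := h2
    have hdo : DifferentiableOn ℝ (fun s => (θ s)⁻¹) (interior (Set.Ici t₁)) := by
      intro x hx
      rw [interior_Ici] at hx
      have hne : θ x ≠ 0 := (hneg x (Set.mem_Ici.mpr (le_of_lt (Set.mem_Ioi.mp hx)))).ne
      exact ((hderivinv x hne).differentiableAt).differentiableWithinAt
    exact Convex.mul_sub_le_image_sub_of_le_deriv (convex_Ici t₁) hcont hdo hd
  -- choose y far enough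
  set y := t₁ + n * (-(θ t₁))⁻¹ + 1 with hy
  have hθ1 : 0 < -(θ t₁) := neg_pos.mpr h1
  have hypos : t₁ ≤ y := by
    have : 0 < n * (-(θ t₁))⁻¹ := mul_pos hn (inv_pos.mpr hθ1)
    simp only [hy]; linarith
  have hkey := key t₁ Set.self_mem_Ici y hypos hypos
  have hθy : θ y < 0 := hneg y hypos
  have hinvy : (θ y)⁻¹ < 0 := inv_neg''.mpr hθy
  have hinv1 : (θ t₁)⁻¹ = -(-(θ t₁))⁻¹ := by rw [← inv_neg, neg_neg]
  -- 1/n * (y - t₁) ≤ (θ y)⁻¹ - (θ t₁)⁻¹ < -(θ t₁)⁻¹ = (-(θ t₁))⁻¹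
  have hlt : (1 / n) * (y - t₁) < (-(θ t₁))⁻¹ := by
    rw [hinv1] at hkey; linarith
  have hyt : y - t₁ = n * (-(θ t₁))⁻¹ + 1 := by simp only [hy]; ring
  rw [hyt] at hlt
  have : (1 / n) * (n * (-(θ t₁))⁻¹ + 1) = (-(θ t₁))⁻¹ + 1 / n := by
    field_simp
  rw [this] at hlt
  have : 0 < 1 / n := by positivity
  linarith

/-- On a complete geodesic with the convergence condition, a nonzero
vorticity-free expansion is impossible: a C¹ function θ : ℝ → ℝ with
θ' + θ²/n ≤ 0 everywhere and θ(t₁) ≠ 0 for some t₁ cannot exist. -/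
theorem complete_expansion_vanishes (n : ℝ) (hn : 0 < n) (θ : ℝ → ℝ)
    (hC : ContDiff ℝ 1 θ)
    (hineq : ∀ t : ℝ, deriv θ t + (θ t) ^ 2 / n ≤ 0)
    (t₁ : ℝ) (h1 : θ t₁ ≠ 0) : False := by
  rcases h1.lt_or_gt with hlt | hgt
  · exact complete_expansion_vanishes_neg n hn θ hC hineq t₁ hlt
  · -- reflect: φ t = -θ (2t₁ - t)
    set φ : ℝ → ℝ := fun t => -θ (2 * t₁ - t) with hφ
    have hdiff : Differentiable ℝ θ := hC.differentiable one_ne_zero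
    have hg : ∀ t : ℝ, HasDerivAt (fun s => 2 * t₁ - s) (-1 : ℝ) t := by
      intro t
      simpa using (hasDerivAt_id t).const_sub (2 * t₁)
    have hφderiv : ∀ t : ℝ, HasDerivAt φ (deriv θ (2 * t₁ - t)) t := by
      intro t
      have := ((hdiff (2 * t₁ - t)).hasDerivAt).comp t (hg t)
      have := this.neg
      have h3 : -(deriv θ (2 * t₁ - t) * -1) = deriv θ (2 * t₁ - t) := by ring
      rw [h3] at this
      exact this
    have hφC : ContDiff ℝ 1 φ := by
      have : ContDiff ℝ 1 (fun t : ℝ => 2 * t₁ - t) := by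
        exact (contDiff_const.sub contDiff_id)
      exact (hC.comp this).neg
    have hφineq : ∀ t : ℝ, deriv φ t + (φ t) ^ 2 / n ≤ 0 := by
      intro t
      rw [(hφderiv t).deriv]
      have := hineq (2 * t₁ - t)
      simpa [hφ] using this
    have hφneg : φ t₁ < 0 := by
      simp only [hφ]
      have : 2 * t₁ - t₁ = t₁ := by ring
      rw [this]; linarith
    exact complete_expansion_vanishes_neg n hn φ hφC hφineq t₁ hφneg
end
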